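/- arXiv:2010.00438 — 2 statements merged into one kernel-verified Lean document; each statement's English description precedes it below -/
import Mathlib

section
/- Let f : ℝ^d → ℝ be a C² probability density with 0 < f ≤ 1, satisfying ‖∇f(u)‖ ≤ C_b f(u)(1 + ln(1/f(u))) and ‖∇²f(u)‖_op ≤ C_c f(u)(1 + ln(1/f(u))) for all u. Then for any x and any r < 1/(2C_b(1 - ln f(x))), |P(B(x,r)) − f(x)·V(B(x,r))| ≤ C_c r² V(B(x,r)) f(x)(1 + ln(1/f(x))), where P(B(x,r)) = ∫_{B(x,r)} f and V denotes Lebesgue volume. -/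
/-!
Write `g = 1 - log f ≥ 1`. The hypothesis on `∇f` says exactly that
`‖∇ log g‖ = ‖∇f‖ / (f g) ≤ C_b`, so `log g` drops by at most `C_b r` on `B(x, r)`. As
`f g = ψ(g)` with `ψ(t) = e^{1-t} t`, and the radius condition reads `C_b r g(x) < 1/2`, this
keeps `f g ≤ 2 f(x) g(x)` on the ball, so the Hessian is bounded there by `K = 2 C_c f(x) g(x)`.
Second-order Taylor expansion at `x` then bounds `f - f(x) - Df(x)(· - x)` by `K r² / 2` on the
ball, and the linear term integrates to zero over the ball by symmetry.
-/

open MeasureTheory Metric Real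

lemma one_le_one_sub_log {a : ℝ} (ha₀ : 0 < a) (ha₁ : a ≤ 1) : 1 ≤ 1 - log a := by
  linarith [log_nonpos ha₀.le ha₁]

lemma one_sub_log_pos {a : ℝ} (ha₀ : 0 < a) (ha₁ : a ≤ 1) : 0 < 1 - log a :=
  zero_lt_one.trans_le (one_le_one_sub_log ha₀ ha₁)

lemma exp_one_sub_mul_le_two_mul {A B c : ℝ} (hA : 0 < A) (hB : 1 ≤ B) (hcB : c * B ≤ 1 / 2)
    (hlog : log B - log A ≤ c) : exp (1 - A) * A ≤ 2 * (exp (1 - B) * B) := by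
  obtain ⟨t, ht, rfl⟩ : ∃ t, 0 < t ∧ A = B * t := ⟨A / B, by positivity, by field_simp⟩
  have hB0 : 0 < B := by linarith
  have h1t : 1 - t ≤ c := by
    rw [log_mul hB0.ne' ht.ne'] at hlog
    linarith [log_le_sub_one_of_pos ht]
  have hexp : (B - 1) * (1 - t) ≤ 1 / 2 := by
    rcases le_or_gt 0 c with hc | hc <;> nlinarith
  calc exp (1 - B * t) * (B * t) ≤ exp (1 - B * t) * (B * exp (t - 1)) := by
        gcongr; linarith [add_one_le_exp (t - 1)]
    _ = exp ((B - 1) * (1 - t)) * (exp (1 - B) * B) := by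
        rw [mul_left_comm, ← exp_add, ← mul_assoc, ← exp_add]; ring_nf
    _ ≤ 2 * (exp (1 - B) * B) := by
        gcongr
        calc exp ((B - 1) * (1 - t)) ≤ exp (1 / 2) := exp_le_exp.mpr hexp
          _ ≤ 1 / (1 - 1 / 2) := exp_bound_div_one_sub_of_interval (by norm_num) (by norm_num)
          _ = 2 := by norm_num

section LogOneSubLog

variable {E : Type*} [NormedAddCommGroup E] [NormedSpace ℝ E] {f : E → ℝ}

lemma hasFDerivAt_log_one_sub_log {f' : E →L[ℝ] ℝ} {u : E} (hf : HasFDerivAt f f' u)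
    (hpos : 0 < f u) (hle : f u ≤ 1) :
    HasFDerivAt (fun v ↦ log (1 - log (f v))) (-(f u * (1 - log (f u)))⁻¹ • f') u := by
  convert ((hf.log hpos.ne').const_sub 1).log
    (one_sub_log_pos hpos hle).ne' using 1
  ext v; simp only [smul_apply, neg_apply, smul_eq_mul, mul_inv]; ring

lemma log_one_sub_log_sub_le (hf : Differentiable ℝ f) (hpos : ∀ u, 0 < f u)
    (hle : ∀ u, f u ≤ 1) {C : ℝ} (hgrad : ∀ u, ‖fderiv ℝ f u‖ ≤ C * (f u * (1 - log (f u))))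
    (u v : E) : log (1 - log (f u)) - log (1 - log (f v)) ≤ C * ‖u - v‖ := by
  have hbound : ∀ w, ‖-(f w * (1 - log (f w)))⁻¹ • fderiv ℝ f w‖ ≤ C := fun w ↦ by
    have hfg : 0 < f w * (1 - log (f w)) :=
      mul_pos (hpos w) (one_sub_log_pos (hpos w) (hle w))
    rw [norm_smul, norm_neg, norm_inv, Real.norm_of_nonneg hfg.le, inv_mul_le_iff₀ hfg, mul_comm]
    exact hgrad w
  have hmvt := convex_univ.norm_image_sub_le_of_norm_hasFDerivWithin_le
    (fun w _ ↦ (hasFDerivAt_log_one_sub_log (hf w).hasFDerivAt (hpos w) (hle w)).hasFDerivWithinAt)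
    (fun w _ ↦ hbound w) (Set.mem_univ v) (Set.mem_univ u)
  exact (le_abs_self _).trans ((Real.norm_eq_abs _).symm.trans_le hmvt)

lemma mul_one_sub_log_le_two_mul_of_mem_closedBall (hf : Differentiable ℝ f)
    (hpos : ∀ u, 0 < f u) (hle : ∀ u, f u ≤ 1) {C : ℝ}
    (hgrad : ∀ u, ‖fderiv ℝ f u‖ ≤ C * (f u * (1 - log (f u)))) {x u : E} {r : ℝ}
    (hr : C * r * (1 - log (f x)) ≤ 1 / 2) (hu : u ∈ closedBall x r) :
    f u * (1 - log (f u)) ≤ 2 * (f x * (1 - log (f x))) := by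
  have hC : 0 ≤ C := nonneg_of_mul_nonneg_left ((norm_nonneg _).trans (hgrad x))
    (mul_pos (hpos x) (one_sub_log_pos (hpos x) (hle x)))
  have hlog : log (1 - log (f x)) - log (1 - log (f u)) ≤ C * r :=
    (log_one_sub_log_sub_le hf hpos hle hgrad x u).trans
      (mul_le_mul_of_nonneg_left (by rw [← dist_eq_norm, dist_comm]; exact hu) hC)
  have hψ := exp_one_sub_mul_le_two_mul (one_sub_log_pos (hpos u) (hle u))
    (one_le_one_sub_log (hpos x) (hle x)) hr hlog
  simpa only [sub_sub_cancel, exp_log (hpos _)] using hψ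

end LogOneSubLog

section Taylor

variable {E F : Type*} [NormedAddCommGroup E] [NormedSpace ℝ E] [NormedAddCommGroup F]
  [NormedSpace ℝ F]

lemma Convex.norm_image_sub_sub_fderiv_le {s : Set E} (hs : Convex ℝ s) {f : E → F}
    {f' : E → E →L[ℝ] F} {f'' : E → E →L[ℝ] E →L[ℝ] F} {K : ℝ}
    (hf : ∀ u ∈ s, HasFDerivAt f (f' u) u) (hf' : ∀ u ∈ s, HasFDerivAt f' (f'' u) u)
    (hK : ∀ u ∈ s, ‖f'' u‖ ≤ K) {x u : E} (hx : x ∈ s) (hu : u ∈ s) :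
    ‖f u - f x - f' x (u - x)‖ ≤ K / 2 * ‖u - x‖ ^ 2 := by
  set v := u - x
  have hseg : ∀ τ ∈ Set.Icc (0 : ℝ) 1, x + τ • v ∈ s := fun τ hτ ↦ by
    simpa [v, add_sub_cancel] using hs.add_smul_sub_mem hx hu hτ
  have hf'_lip : ∀ w ∈ s, ‖f' w - f' x‖ ≤ K * ‖w - x‖ := fun w hw ↦
    hs.norm_image_sub_le_of_norm_hasFDerivWithin_le (fun y hy ↦ (hf' y hy).hasFDerivWithinAt)
      hK hx hw
  let g : ℝ → F := fun τ ↦ f (x + τ • v) - τ • f' x v - f x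
  have hg : ∀ τ ∈ Set.Icc (0 : ℝ) 1, HasDerivAt g (f' (x + τ • v) v - f' x v) τ := by
    intro τ hτ
    have hline : HasDerivAt (fun τ : ℝ ↦ x + τ • v) v τ := by
      simpa using ((hasDerivAt_id τ).smul_const v).const_add x
    exact ((((hf _ (hseg τ hτ)).comp_hasDerivAt τ hline).sub
      ((hasDerivAt_id τ).smul_const (f' x v))).sub_const (f x)).congr_deriv (by simp)
  have hg'_le : ∀ τ ∈ Set.Ico (0 : ℝ) 1, ‖f' (x + τ • v) v - f' x v‖ ≤ K * ‖v‖ ^ 2 * τ := by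
    intro τ hτ
    calc ‖f' (x + τ • v) v - f' x v‖ ≤ ‖f' (x + τ • v) - f' x‖ * ‖v‖ := by
          rw [← sub_apply]; exact ContinuousLinearMap.le_opNorm _ _
      _ ≤ K * ‖τ • v‖ * ‖v‖ := by
          gcongr; simpa using hf'_lip _ (hseg τ (Set.Ico_subset_Icc_self hτ))
      _ = K * ‖v‖ ^ 2 * τ := by rw [norm_smul, norm_of_nonneg hτ.1]; ring
  have hbound : ∀ τ, HasDerivAt (fun τ : ℝ ↦ K * ‖v‖ ^ 2 / 2 * τ ^ 2) (K * ‖v‖ ^ 2 * τ) τ :=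
    fun τ ↦ ((hasDerivAt_pow 2 τ).const_mul (K * ‖v‖ ^ 2 / 2)).congr_deriv (by ring)
  have hg1 := image_norm_le_of_norm_deriv_right_le_deriv_boundary
    (fun τ hτ ↦ (hg τ hτ).continuousAt.continuousWithinAt)
    (fun τ hτ ↦ (hg τ (Set.Ico_subset_Icc_self hτ)).hasDerivWithinAt) (by simp [g]) hbound
    hg'_le (Set.right_mem_Icc.mpr zero_le_one)
  have hg1_eq : g 1 = f u - f x - f' x v := by simp only [g, v, one_smul, add_sub_cancel]; abel
  calc ‖f u - f x - f' x v‖ = ‖g 1‖ := by rw [hg1_eq]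
    _ ≤ K * ‖v‖ ^ 2 / 2 * 1 ^ 2 := hg1
    _ = K / 2 * ‖v‖ ^ 2 := by ring

end Taylor

section BallIntegral

variable {E : Type*} [NormedAddCommGroup E] [NormedSpace ℝ E] [MeasurableSpace E] [BorelSpace E]

lemma setIntegral_closedBall_sub_center (μ : Measure E) [μ.IsAddRightInvariant]
    [μ.IsNegInvariant] (x : E) (r : ℝ) :
    ∫ u in closedBall x r, (u - x) ∂μ = 0 := by
  set g : E → E := (closedBall 0 r).indicator id
  have hg_odd : ∀ w, g (-w) = -g w := fun w ↦ by
    by_cases hw : w ∈ closedBall 0 r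
    · have hw' : -w ∈ closedBall (0 : E) r := by simpa using hw
      simp [g, Set.indicator_of_mem hw, Set.indicator_of_mem hw']
    · have hw' : -w ∉ closedBall (0 : E) r := by simpa using hw
      simp [g, Set.indicator_of_notMem hw, Set.indicator_of_notMem hw']
  have hg_int : ∫ w, g w ∂μ = 0 := by
    have hneg := integral_neg_eq_self g μ
    simp only [hg_odd, integral_neg] at hneg
    have : IsAddTorsionFree E := .of_isTorsionFree ℝ E
    exact neg_eq_self.mp hneg
  calc ∫ u in closedBall x r, (u - x) ∂μ = ∫ u, g (u - x) ∂μ := by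
        rw [← integral_indicator measurableSet_closedBall]
        congr 1 with u
        simp [g, Set.indicator, mem_closedBall, dist_eq_norm]
    _ = 0 := by rw [integral_sub_right_eq_self g x, hg_int]

lemma abs_setIntegral_closedBall_sub_mul_measureReal_le [FiniteDimensional ℝ E] (μ : Measure E)
    [μ.IsAddHaarMeasure] {f : E → ℝ} (hf : ContDiff ℝ 2 f) {x : E} {r K : ℝ}
    (hK : ∀ u ∈ closedBall x r, ‖fderiv ℝ (fderiv ℝ f) u‖ ≤ K) :
    |(∫ u in closedBall x r, f u ∂μ) - f x * μ.real (closedBall x r)| ≤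
      K / 2 * r ^ 2 * μ.real (closedBall x r) := by
  have hDf : ∀ u, HasFDerivAt f (fderiv ℝ f u) u := fun u ↦
    ((hf.differentiable (by norm_num)) u).hasFDerivAt
  have hD2f : ∀ u, HasFDerivAt (fderiv ℝ f) (fderiv ℝ (fderiv ℝ f) u) u := fun u ↦
    (((hf.fderiv_right (m := 1) le_rfl).differentiable (by norm_num)) u).hasFDerivAt
  have htaylor :
      ∀ u ∈ closedBall x r, ‖f u - f x - fderiv ℝ f x (u - x)‖ ≤ K / 2 * r ^ 2 := by
    intro u hu
    have hx : x ∈ closedBall x r := mem_closedBall_self (dist_nonneg.trans hu)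
    have hK0 : 0 ≤ K := (norm_nonneg (fderiv ℝ (fderiv ℝ f) u)).trans (hK u hu)
    calc ‖f u - f x - fderiv ℝ f x (u - x)‖ ≤ K / 2 * ‖u - x‖ ^ 2 :=
          (convex_closedBall x r).norm_image_sub_sub_fderiv_le (fun v _ ↦ hDf v)
            (fun v _ ↦ hD2f v) hK hx hu
      _ ≤ K / 2 * r ^ 2 := by gcongr; rw [← dist_eq_norm]; exact hu
  have hball : IsCompact (closedBall x r) := isCompact_closedBall x r
  have hf_int : IntegrableOn f (closedBall x r) μ :=
    hf.continuous.continuousOn.integrableOn_compact hball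
  have hconst_int : IntegrableOn (fun _ ↦ f x) (closedBall x r) μ :=
    integrableOn_const hball.measure_lt_top.ne
  have hsub_int : IntegrableOn (fun u ↦ u - x) (closedBall x r) μ :=
    (continuous_sub_right x).continuousOn.integrableOn_compact hball
  have hlin : ∫ u in closedBall x r, fderiv ℝ f x (u - x) ∂μ = 0 := by
    rw [(fderiv ℝ f x).integral_comp_comm hsub_int, setIntegral_closedBall_sub_center, map_zero]
  have hsplit : (∫ u in closedBall x r, f u ∂μ) - f x * μ.real (closedBall x r) =
      ∫ u in closedBall x r, (f u - f x - fderiv ℝ f x (u - x)) ∂μ := by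
    rw [integral_sub (f := fun u ↦ f u - f x) (hf_int.sub hconst_int)
      ((fderiv ℝ f x).integrable_comp hsub_int), integral_sub hf_int hconst_int, hlin,
      setIntegral_const, smul_eq_mul]
    ring
  rw [hsplit, ← Real.norm_eq_abs]
  exact norm_setIntegral_le_of_norm_le_const hball.measure_lt_top htaylor

end BallIntegral

theorem stmt10_general {d : ℕ} (f : EuclideanSpace ℝ (Fin d) → ℝ) (Cb Cc : ℝ)
    (hCb : 0 < Cb) (hCc : 0 < Cc)
    (hf : ContDiff ℝ 2 f) (hpos : ∀ u, 0 < f u) (hle : ∀ u, f u ≤ 1)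
    (hgrad : ∀ u, ‖gradient f u‖ ≤ Cb * f u * (1 + Real.log (1 / f u)))
    (hhess : ∀ u, ‖fderiv ℝ (fderiv ℝ f) u‖ ≤ Cc * f u * (1 + Real.log (1 / f u)))
    (x : EuclideanSpace ℝ (Fin d)) (r : ℝ)
    (hrlt : r < 1 / (2 * Cb * (1 - Real.log (f x)))) :
    |(∫ u in closedBall x r, f u) - f x * (volume (closedBall x r)).toReal| ≤
      Cc * r ^ 2 * (volume (closedBall x r)).toReal * f x *
        (1 + Real.log (1 / f x)) := by
  have hlog : ∀ u, 1 + log (1 / f u) = 1 - log (f u) := fun u ↦ by rw [one_div, log_inv]; ring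
  have hgrad' : ∀ u, ‖fderiv ℝ f u‖ ≤ Cb * (f u * (1 - log (f u))) := fun u ↦ by
    rw [← toDual_gradient, LinearIsometryEquiv.norm_map, ← mul_assoc, ← hlog]
    exact hgrad u
  have hr : Cb * r * (1 - log (f x)) ≤ 1 / 2 := by
    have hs : 0 < 2 * Cb * (1 - log (f x)) :=
      mul_pos (mul_pos two_pos hCb) (one_sub_log_pos (hpos x) (hle x))
    rw [lt_div_iff₀ hs] at hrlt
    linarith
  have hK : ∀ u ∈ closedBall x r,
      ‖fderiv ℝ (fderiv ℝ f) u‖ ≤ 2 * Cc * (f x * (1 - log (f x))) := fun u hu ↦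
    calc ‖fderiv ℝ (fderiv ℝ f) u‖ ≤ Cc * (f u * (1 - log (f u))) := by
          rw [← mul_assoc, ← hlog]; exact hhess u
      _ ≤ Cc * (2 * (f x * (1 - log (f x)))) :=
          mul_le_mul_of_nonneg_left (mul_one_sub_log_le_two_mul_of_mem_closedBall
            (hf.differentiable two_ne_zero) hpos hle hgrad' hr hu) hCc.le
      _ = 2 * Cc * (f x * (1 - log (f x))) := by ring
  calc _ ≤ 2 * Cc * (f x * (1 - log (f x))) / 2 * r ^ 2 * volume.real (closedBall x r) :=
        abs_setIntegral_closedBall_sub_mul_measureReal_le volume hf hK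
    _ = _ := by rw [hlog, measureReal_def]; ring

/-- For a `C²` probability density `f` with `0 < f ≤ 1`, whose gradient and
Hessian decay with the density, and any `r < 1/(2C_b(1 - ln f(x)))`:
`|P(B(x,r)) − f(x)·V(B(x,r))| ≤ C_c r² V(B(x,r)) f(x)(1 + ln(1/f(x)))`. -/
theorem stmt10 {d : ℕ} (f : EuclideanSpace ℝ (Fin d) → ℝ) (Cb Cc : ℝ)
    (hCb : 0 < Cb) (hCc : 0 < Cc)
    (hf : ContDiff ℝ 2 f) (hpos : ∀ u, 0 < f u) (hle : ∀ u, f u ≤ 1)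
    (hint : ∫ u, f u = 1)
    (hgrad : ∀ u, ‖gradient f u‖ ≤ Cb * f u * (1 + Real.log (1 / f u)))
    (hhess : ∀ u, ‖fderiv ℝ (fderiv ℝ f) u‖ ≤ Cc * f u * (1 + Real.log (1 / f u)))
    (x : EuclideanSpace ℝ (Fin d)) (r : ℝ) (hr : 0 ≤ r)
    (hrlt : r < 1 / (2 * Cb * (1 - Real.log (f x)))) :
    |(∫ u in closedBall x r, f u) - f x * (volume (closedBall x r)).toReal| ≤
      Cc * r ^ 2 * (volume (closedBall x r)).toReal * f x *
        (1 + Real.log (1 / f x)) :=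
  stmt10_general f Cb Cc hCb hCc hf hpos hle hgrad hhess x r hrlt
end

section
/- The ODE initial value problem g(0) = f₀, g'(r) = C·g(r)·(1 − ln g(r)) with 0 < f₀ ≤ 1 and C > 0 has the solution g(r) = e^{1 − e^{-Cr}} · f₀^{e^{-Cr}} for r ≥ 0, and any C¹ function h with h(0) ≤ f₀ and h'(r) ≤ C·h(r)(1 − ln h(r)), 0 < h ≤ e, satisfies h(r) ≤ g(r) for all r ≥ 0. -/
/-!
Substituting `u = 1 - log h` turns `h' ≤ C h (1 - log h)` into `u' ≥ -C u`, i.e. `e^{C r} u(r)` is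
nondecreasing. Equality holds for `g`, for which `e^{C r} (1 - log g(r)) = 1 - log f₀` is constant,
so `1 - log h(r) ≥ e^{-C r} (1 - log h(0)) ≥ e^{-C r} (1 - log f₀) = 1 - log g(r)` for `r ≥ 0`.
-/

open Real

/-- The Gompertz curve with rate `C`, written through `a = 1 - log g(0)`. -/
noncomputable def gompertz (C a r : ℝ) : ℝ :=
  exp (1 - exp (-C * r) * a)

theorem exp_one_sub_mul_rpow {x : ℝ} (hx : 0 < x) (t : ℝ) :
    exp (1 - t) * x ^ t = exp (1 - t * (1 - log x)) := by
  rw [rpow_def_of_pos hx, ← exp_add]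
  ring_nf

theorem gompertz_zero (C a : ℝ) : gompertz C a 0 = exp (1 - a) := by
  simp [gompertz]

theorem log_gompertz (C a r : ℝ) : log (gompertz C a r) = 1 - exp (-C * r) * a :=
  log_exp _

theorem hasDerivAt_gompertz (C a r : ℝ) :
    HasDerivAt (gompertz C a) (C * gompertz C a r * (1 - log (gompertz C a r))) r := by
  have hexp : HasDerivAt (fun s => exp (-C * s)) (exp (-C * r) * -C) r := by
    simpa using ((hasDerivAt_id r).const_mul (-C)).exp
  refine ((hexp.mul_const a).const_sub 1).exp.congr_deriv ?_
  rw [log_gompertz, gompertz]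
  ring

theorem gompertz_le_gompertz {a b : ℝ} (hab : a ≤ b) (C r : ℝ) :
    gompertz C b r ≤ gompertz C a r :=
  exp_le_exp.mpr (by gcongr)

section Comparison

variable {C : ℝ} {h h' : ℝ → ℝ}

theorem monotone_exp_mul_one_sub_log (hh : ∀ r, HasDerivAt h (h' r) r) (hpos : ∀ r, 0 < h r)
    (hineq : ∀ r, h' r ≤ C * h r * (1 - log (h r))) :
    Monotone fun r => exp (C * r) * (1 - log (h r)) := by
  have hderiv : ∀ r, HasDerivAt (fun s => exp (C * s) * (1 - log (h s)))
      (exp (C * r) * (C * (1 - log (h r)) - h' r / h r)) r := by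
    intro r
    have hexp : HasDerivAt (fun s => exp (C * s)) (exp (C * r) * C) r := by
      simpa using ((hasDerivAt_id r).const_mul C).exp
    exact (hexp.mul (((hh r).log (hpos r).ne').const_sub 1)).congr_deriv (by ring)
  refine monotone_of_deriv_nonneg (fun r => (hderiv r).differentiableAt) fun r => ?_
  rw [(hderiv r).deriv]
  have hquot : h' r / h r ≤ C * (1 - log (h r)) := by
    rw [div_le_iff₀ (hpos r)]
    linarith [hineq r]
  exact mul_nonneg (exp_pos _).le (sub_nonneg.mpr hquot)

theorem le_gompertz_of_deriv_le (hh : ∀ r, HasDerivAt h (h' r) r) (hpos : ∀ r, 0 < h r)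
    (hineq : ∀ r, h' r ≤ C * h r * (1 - log (h r))) {r : ℝ} (hr : 0 ≤ r) :
    h r ≤ gompertz C (1 - log (h 0)) r := by
  have hmono := monotone_exp_mul_one_sub_log hh hpos hineq hr
  simp only [mul_zero, exp_zero, one_mul] at hmono
  have hscaled : exp (-C * r) * (1 - log (h 0)) ≤ 1 - log (h r) := by
    calc exp (-C * r) * (1 - log (h 0))
        ≤ exp (-C * r) * (exp (C * r) * (1 - log (h r))) := by gcongr
      _ = 1 - log (h r) := by rw [← mul_assoc, ← exp_add]; simp
  rw [← exp_log (hpos r), gompertz]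
  exact exp_le_exp.mpr (by linarith)

end Comparison

theorem stmt12_general (C f₀ : ℝ) (hf₀ : 0 < f₀)
    (g : ℝ → ℝ)
    (hg : g = fun r => Real.exp (1 - Real.exp (-C * r)) * f₀ ^ Real.exp (-C * r)) :
    g 0 = f₀ ∧
    (∀ r : ℝ, 0 ≤ r → HasDerivAt g (C * g r * (1 - Real.log (g r))) r) ∧
    (∀ h h' : ℝ → ℝ, (∀ r, HasDerivAt h (h' r) r) → h 0 ≤ f₀ →
      (∀ r, 0 < h r ∧ h r ≤ Real.exp 1) →
      (∀ r, h' r ≤ C * h r * (1 - Real.log (h r))) →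
      ∀ r : ℝ, 0 ≤ r → h r ≤ g r) := by
  obtain rfl : g = gompertz C (1 - log f₀) := by
    rw [hg]
    funext r
    exact exp_one_sub_mul_rpow hf₀ _
  refine ⟨by simp [gompertz_zero, exp_log hf₀], fun r _ => hasDerivAt_gompertz C _ r, ?_⟩
  intro h h' hh hh0 hbounds hineq r hr
  have hpos : ∀ r, 0 < h r := fun r => (hbounds r).1
  calc h r ≤ gompertz C (1 - log (h 0)) r := le_gompertz_of_deriv_le hh hpos hineq hr
    _ ≤ gompertz C (1 - log f₀) r :=
      gompertz_le_gompertz (by linarith [log_le_log (hpos 0) hh0]) C r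

/-- The IVP `g(0) = f₀`, `g' = C g (1 − ln g)` (with `0 < f₀ ≤ 1`, `C > 0`) is
solved by `g(r) = e^{1 − e^{-Cr}} f₀^{e^{-Cr}}` on `r ≥ 0`, and any `C¹`
function `h` with `h(0) ≤ f₀`, `0 < h ≤ e` and `h' ≤ C h (1 − ln h)`
satisfies `h ≤ g` on `r ≥ 0`. -/
theorem stmt12 (C f₀ : ℝ) (hC : 0 < C) (hf₀ : 0 < f₀) (hf₀' : f₀ ≤ 1)
    (g : ℝ → ℝ)
    (hg : g = fun r => Real.exp (1 - Real.exp (-C * r)) * f₀ ^ Real.exp (-C * r)) :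
    g 0 = f₀ ∧
    (∀ r : ℝ, 0 ≤ r → HasDerivAt g (C * g r * (1 - Real.log (g r))) r) ∧
    (∀ h h' : ℝ → ℝ, (∀ r, HasDerivAt h (h' r) r) → h 0 ≤ f₀ →
      (∀ r, 0 < h r ∧ h r ≤ Real.exp 1) →
      (∀ r, h' r ≤ C * h r * (1 - Real.log (h r))) →
      ∀ r : ℝ, 0 ≤ r → h r ≤ g r) :=
  stmt12_general C f₀ hf₀ g hg
end
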